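/- If (x; x_1,...,x_n) ∈ C, then x ≥ 0 and x_i ≥ 0 for every i with 1 ≤ i ≤ n. -/

import Mathlib

/-- The product `(x; x_i)·(y; y_i) = x*y - ∑ i, x_i * y_i` on `ℝ^{1+(n+3)}`. -/
def dotp {n : ℕ} (x y : ℝ × (Fin (n + 3) → ℝ)) : ℝ :=
  x.1 * y.1 - ∑ i, x.2 i * y.2 i

/-- The vector `-K = (3; 1, 1, …, 1)`. -/
def negK {n : ℕ} : ℝ × (Fin (n + 3) → ℝ) := (3, fun _ => 1)

/-- The Cremona transform. -/
def Cr {n : ℕ} (d : ℝ × (Fin (n + 3) → ℝ)) : ℝ × (Fin (n + 3) → ℝ) :=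
  (2 * d.1 - d.2 0 - d.2 1 - d.2 2,
    fun i =>
      if i = 0 then d.1 - d.2 1 - d.2 2
      else if i = 1 then d.1 - d.2 0 - d.2 2
      else if i = 2 then d.1 - d.2 0 - d.2 1
      else d.2 i)

/-- A vector is positive if all its entries are nonnegative. -/
def PositiveVec {n : ℕ} (d : ℝ × (Fin (n + 3) → ℝ)) : Prop :=
  0 ≤ d.1 ∧ ∀ i, 0 ≤ d.2 i

/-- A vector is ordered if `d_i ≥ d_{i+1}` whenever both are nonzero, and nonzero
entries precede zero entries. -/
def OrderedVec {n : ℕ} (d : ℝ × (Fin (n + 3) → ℝ)) : Prop :=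
  (∀ (i : ℕ) (h1 : i < n + 3) (h2 : i + 1 < n + 3),
      d.2 ⟨i, h1⟩ ≠ 0 → d.2 ⟨i + 1, h2⟩ ≠ 0 → d.2 ⟨i + 1, h2⟩ ≤ d.2 ⟨i, h1⟩) ∧
  (∀ i j : Fin (n + 3), d.2 i ≠ 0 → d.2 j = 0 → i < j)

/-- A vector is reduced if it is positive, ordered, and `d ≥ d_1 + d_2 + d_3`. -/
def ReducedVec {n : ℕ} (d : ℝ × (Fin (n + 3) → ℝ)) : Prop :=
  PositiveVec d ∧ OrderedVec d ∧ d.2 0 + d.2 1 + d.2 2 ≤ d.1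

/-- A vector has integer entries. -/
def IntVec {n : ℕ} (d : ℝ × (Fin (n + 3) → ℝ)) : Prop :=
  (∃ z : ℤ, d.1 = z) ∧ ∀ i, ∃ z : ℤ, d.2 i = z

/-- The set `E` of integer vectors with `(d;d_i)·(d;d_i) ≥ -1` and `-K·(d;d_i) = 1`. -/
def ESet {n : ℕ} : Set (ℝ × (Fin (n + 3) → ℝ)) :=
  {d | IntVec d ∧ -1 ≤ dotp d d ∧ dotp negK d = 1}

/-- The set `C` of integer vectors with `(x;x_i)·(x;x_i) ≥ 0` that pair nonnegatively
with every element of `E`. -/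
def CSet {n : ℕ} : Set (ℝ × (Fin (n + 3) → ℝ)) :=
  {x | IntVec x ∧ 0 ≤ dotp x x ∧ ∀ d ∈ ESet, 0 ≤ dotp x d}

/-!
The exceptional classes `(0; -e_i)` and the line classes `(1; e_i + e_j)`, `i ≠ j`, lie in `E`.
Pairing `x ∈ C` with them gives `x_i ≥ 0` and `x ≥ x_i + x_j`, hence also `x ≥ 0`.
-/

section

variable {n : ℕ}

def exceptionalClass (i : Fin (n + 3)) : ℝ × (Fin (n + 3) → ℝ) :=
  (0, Pi.single i (-1))

def lineClass (i j : Fin (n + 3)) : ℝ × (Fin (n + 3) → ℝ) :=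
  (1, Pi.single i 1 + Pi.single j 1)

theorem dotp_exceptionalClass (x : ℝ × (Fin (n + 3) → ℝ)) (i : Fin (n + 3)) :
    dotp x (exceptionalClass i) = x.2 i := by
  simp [dotp, exceptionalClass, Pi.single_apply]

theorem dotp_lineClass (x : ℝ × (Fin (n + 3) → ℝ)) (i j : Fin (n + 3)) :
    dotp x (lineClass i j) = x.1 - x.2 i - x.2 j := by
  simp only [dotp, lineClass, Pi.add_apply, mul_add, Finset.sum_add_distrib, Pi.single_apply,
    mul_ite, mul_one, mul_zero, Finset.sum_ite_eq', Finset.mem_univ, if_true]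
  ring

theorem intVec_exceptionalClass (i : Fin (n + 3)) : IntVec (exceptionalClass i) :=
  ⟨⟨0, by simp [exceptionalClass]⟩,
    fun j => ⟨(Pi.single i (-1) : Fin (n + 3) → ℤ) j, by
      simp only [exceptionalClass, Pi.single_apply]
      split_ifs <;> norm_num⟩⟩

theorem intVec_lineClass (i j : Fin (n + 3)) : IntVec (lineClass i j) :=
  ⟨⟨1, by simp [lineClass]⟩,
    fun k => ⟨(Pi.single i 1 + Pi.single j 1 : Fin (n + 3) → ℤ) k, by
      simp only [lineClass, Pi.add_apply, Pi.single_apply]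
      split_ifs <;> norm_num⟩⟩

theorem exceptionalClass_mem_ESet (i : Fin (n + 3)) : exceptionalClass i ∈ ESet := by
  refine ⟨intVec_exceptionalClass i, ?_, ?_⟩
  · rw [dotp_exceptionalClass]
    simp [exceptionalClass]
  · rw [dotp_exceptionalClass]
    rfl

theorem lineClass_mem_ESet {i j : Fin (n + 3)} (hij : i ≠ j) : lineClass i j ∈ ESet := by
  refine ⟨intVec_lineClass i j, ?_, ?_⟩
  · rw [dotp_lineClass]
    simp [lineClass, hij, hij.symm]
  · rw [dotp_lineClass]
    norm_num [negK]

end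

theorem C_nonneg {n : ℕ} (x : ℝ × (Fin (n + 3) → ℝ)) (hx : x ∈ CSet) :
    0 ≤ x.1 ∧ ∀ i, 0 ≤ x.2 i := by
  obtain ⟨-, -, hE⟩ := hx
  have hcoord : ∀ i, 0 ≤ x.2 i := fun i => by
    simpa only [dotp_exceptionalClass] using hE _ (exceptionalClass_mem_ESet i)
  have hline : 0 ≤ x.1 - x.2 0 - x.2 1 := by
    simpa only [dotp_lineClass] using hE _ (lineClass_mem_ESet Fin.zero_ne_one)
  exact ⟨by linarith [hcoord 0, hcoord 1], hcoord⟩
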